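/- For any m ∈ [M_n], let Π_{n,≤m} := m^{−1} Σ_{k=1}^{m} Π_{n,k} and let Q̂_{n,≤m} := Σ_{k=1}^{m} ω_k Q̂_{n,k} with weights ω_k := exp(−mVFE_n(k)) / Σ_{k'=1}^{m} exp(−mVFE_n(k')). Then, pointwise in the sample, λ ∫ ℓ_n(θ) dQ̂_{n,≤m}(θ) + KL(Q̂_{n,≤m}, Π_{n,≤m}) ≤ log m + inf over probability weights (ω̃_1,…,ω̃_m) in the simplex of Σ_{k=1}^{m} ω̃_k · log( ω̃_k / exp(−mVFE_n(k)) ), which in turn is at most log m + min_{k ∈ [m]} mVFE_n(k). -/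

import Mathlib

open MeasureTheory Filter Set ENNReal NNReal

noncomputable section

variable {Θ : Type*} [MeasurableSpace Θ]

open Classical in
/-- The Kullback–Leibler divergence `KL(μ, ν) = ∫ log (dμ/dν) dμ` when `μ ≪ ν` (and the
log-likelihood ratio is `μ`-integrable), and `∞` otherwise. -/
def KL (μ ν : Measure Θ) : ℝ≥0∞ :=
  if μ ≪ ν ∧ Integrable (llr μ ν) μ then ENNReal.ofReal (∫ θ, llr μ ν θ ∂μ) else ⊤

/-- The variational free energy `λ ∫ ℓ dQ + KL(Q, Π)` (valued in `ℝ≥0∞`). -/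
def VFE (lam : ℝ) (loss : Θ → ℝ) (prior Q : Measure Θ) : ℝ≥0∞ :=
  ENNReal.ofReal lam * ∫⁻ θ, ENNReal.ofReal (loss θ) ∂Q + KL Q prior

open Classical in
/-- `exp (-x)` for `x : ℝ≥0∞`, equal to `0` when `x = ∞`. -/
def expNeg (x : ℝ≥0∞) : ℝ := if x = ⊤ then 0 else Real.exp (-x.toReal)

/-- The excess risk of a model with prior `prior`: `- log ∫ exp (-ξ₁ L(θ)) dΠ(θ)`. -/
def modelRisk (ξ1 : ℝ) (L : Θ → ℝ) (prior : Measure Θ) : ℝ :=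
  - Real.log (∫ θ, Real.exp (-(ξ1 * L θ)) ∂prior)

/-- The early-stopping index `inf {k ∈ {2,…,M} : G (k-1) < G k} ∧ M`. -/
def stopIdx {α : Type*} [LT α] (M : ℕ) (G : ℕ → α) : ℕ :=
  sInf ({k | 2 ≤ k ∧ k ≤ M ∧ G (k - 1) < G k} ∪ {M})

/-- The near-optimal index `inf {k ∈ [M] : E k ≤ (1+τ) E (k+1)} ∧ M`. -/
def kdag (M : ℕ) (E : ℕ → ℝ) (τ : ℝ) : ℕ :=
  sInf ({k | 1 ≤ k ∧ k ≤ M ∧ E k ≤ (1 + τ) * E (k + 1)} ∪ {M})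

/-- The index `sup {k ∈ [M], k ≥ kd : E k ≤ (1+ν) Estar} ∨ kd`. -/
def kcirc (M kd : ℕ) (E : ℕ → ℝ) (Estar ν : ℝ) : ℕ :=
  sSup ({k | kd ≤ k ∧ k ≤ M ∧ E k ≤ (1 + ν) * Estar} ∪ {kd})

/-- The minimum `min {E k : k ∈ [m]}`. -/
def minIdx (m : ℕ) (E : ℕ → ℝ) : ℝ := sInf (E '' {k | 1 ≤ k ∧ k ≤ m})

/-- The generalized (Gibbs) posterior with density proportional to `exp (-λ ℓ(θ))`
with respect to `prior`. -/
def gibbs (lam : ℝ) (loss : Θ → ℝ) (prior : Measure Θ) : Measure Θ :=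
  (∫⁻ θ, ENNReal.ofReal (Real.exp (-(lam * loss θ))) ∂prior)⁻¹ •
    prior.withDensity fun θ => ENNReal.ofReal (Real.exp (-(lam * loss θ)))

open Classical in
/-- The `a`-Rényi divergence `(a-1)⁻¹ log ∫ (dμ/dν)^(a-1) dμ` when `μ ≪ ν`, `∞` otherwise. -/
def renyiDiv (a : ℝ) (μ ν : Measure Θ) : ℝ≥0∞ :=
  if μ ≪ ν then
    ENNReal.ofReal ((a - 1)⁻¹ * Real.log (∫ θ, ((μ.rnDeriv ν θ).toReal) ^ (a - 1) ∂μ))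
  else ⊤

/-- The `ε`-covering number of `S` with respect to `h`. -/
def coverNum {Θ : Type*} (h : Θ → Θ → ℝ) (ε : ℝ) (S : Set Θ) : ℝ≥0∞ :=
  ⨅ (T : Finset Θ) (_ : ∀ θ ∈ S, ∃ t ∈ T, h t θ ≤ ε), (T.card : ℝ≥0∞)

end

/-!
Let `ω_k ∝ exp (-mVFE k)` be the Gibbs weights and `Π̄` the uniform mixture of the priors.
The Kullback–Leibler divergence is jointly convex (pointwise Jensen for `klFun`), so
`KL(∑ ω_k Q̂_k, Π̄) ≤ ∑ ω_k (log (m ω_k) + KL(Q̂_k, Π_k))`. The loss term is linear in the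
mixture, hence the free energy of the aggregate is at most `∑ ω_k (log (m ω_k) + mVFE k)`, which
for the Gibbs weights equals `log m - log ∑ exp (-mVFE k)`. By the Gibbs variational inequality
(`log x ≥ 1 - 1/x` termwise) `-log ∑ exp (-mVFE k)` is a lower bound of
`∑ ω̃_k (log ω̃_k + mVFE k)` on the simplex; the vertices of the simplex give the second inequality.
-/

lemma Real.neg_log_sum_le_sum_mul_log_sub_log {ι : Type*} (S : Finset ι) {v e : ι → ℝ}
    (hv0 : ∀ k ∈ S, 0 ≤ v k) (hv1 : ∑ k ∈ S, v k = 1) (he0 : ∀ k ∈ S, 0 ≤ e k)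
    (he : ∀ k ∈ S, 0 < v k → 0 < e k) :
    -Real.log (∑ k ∈ S, e k) ≤ ∑ k ∈ S, v k * (Real.log (v k) - Real.log (e k)) := by
  obtain ⟨k₀, hk₀, hv₀⟩ : ∃ k ∈ S, (0 : ℝ) < v k := Finset.exists_lt_of_sum_lt (by simp [hv1])
  set Z := ∑ k ∈ S, e k
  have hZ : 0 < Z := Finset.sum_pos' he0 ⟨k₀, hk₀, he k₀ hk₀ hv₀⟩
  have hterm : ∀ k ∈ S, v k - e k / Z ≤
      v k * (Real.log (v k) - Real.log (e k)) + v k * Real.log Z := by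
    intro k hk
    rcases (hv0 k hk).eq_or_lt with h0 | hpos
    · rw [← h0, zero_sub, zero_mul, zero_mul, add_zero, neg_nonpos]
      exact div_nonneg (he0 k hk) hZ.le
    have hek := he k hk hpos
    have h := Real.one_sub_inv_le_log_of_pos (div_pos (mul_pos hpos hZ) hek)
    rw [Real.log_div (mul_pos hpos hZ).ne' hek.ne', Real.log_mul hpos.ne' hZ.ne', inv_div] at h
    calc v k - e k / Z = v k * (1 - e k / (v k * Z)) := by field_simp
      _ ≤ v k * (Real.log (v k) + Real.log Z - Real.log (e k)) :=
        mul_le_mul_of_nonneg_left h hpos.le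
      _ = _ := by ring
  have hsum := Finset.sum_le_sum hterm
  rw [Finset.sum_sub_distrib, ← Finset.sum_div, hv1, div_self hZ.ne', sub_self,
    Finset.sum_add_distrib, ← Finset.sum_mul, hv1, one_mul] at hsum
  linarith

lemma Real.sum_mul_log_card_mul_nonneg {ι : Type*} (S : Finset ι) {v : ι → ℝ}
    (hv0 : ∀ k ∈ S, 0 ≤ v k) (hv1 : ∑ k ∈ S, v k = 1) :
    0 ≤ ∑ k ∈ S, v k * Real.log (S.card * v k) := by
  have hS : (0 : ℝ) < S.card := by
    exact_mod_cast (Finset.nonempty_of_sum_ne_zero (by rw [hv1]; exact one_ne_zero)).card_pos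
  have h := Real.neg_log_sum_le_sum_mul_log_sub_log S hv0 hv1 (e := fun _ ↦ (S.card : ℝ)⁻¹)
    (fun _ _ ↦ by positivity) (fun _ _ _ ↦ by positivity)
  rw [Finset.sum_const, nsmul_eq_mul, mul_inv_cancel₀ hS.ne', Real.log_one, neg_zero] at h
  refine h.trans_eq (Finset.sum_congr rfl fun k hk ↦ ?_)
  rcases (hv0 k hk).eq_or_lt with h0 | hpos
  · simp [← h0]
  · rw [Real.log_inv, Real.log_mul hS.ne' hpos.ne']
    ring

namespace InformationTheory

variable {α : Type*} {mα : MeasurableSpace α}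

/-- Joint convexity: with `pᵢ = dνᵢ/d(ν₁ + ν₂)` we have `p₁ + p₂ = 1` and
`d(μ₁ + μ₂)/d(ν₁ + ν₂) = p₁ x₁ + p₂ x₂` for `xᵢ = dμᵢ/dνᵢ`, so Jensen's inequality for the
convex function `klFun` applies pointwise. -/
lemma klDiv_add_le_add (μ₁ μ₂ ν₁ ν₂ : Measure α) [IsFiniteMeasure μ₁] [IsFiniteMeasure μ₂]
    [IsFiniteMeasure ν₁] [IsFiniteMeasure ν₂] :
    klDiv (μ₁ + μ₂) (ν₁ + ν₂) ≤ klDiv μ₁ ν₁ + klDiv μ₂ ν₂ := by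
  by_cases h₁ : μ₁ ≪ ν₁
  swap; · simp [klDiv_of_not_ac h₁]
  by_cases h₂ : μ₂ ≪ ν₂
  swap; · simp [klDiv_of_not_ac h₂]
  have hν₁ : ν₁ ≪ ν₁ + ν₂ := Measure.AbsolutelyContinuous.rfl.add_right _
  have hν₂ : ν₂ ≪ ν₁ + ν₂ := by
    rw [add_comm]
    exact Measure.AbsolutelyContinuous.rfl.add_right _
  have hmeas : ∀ μ ν : Measure α,
      AEMeasurable (fun x ↦ ENNReal.ofReal (klFun (μ.rnDeriv ν x).toReal)) (ν₁ + ν₂) :=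
    fun μ ν ↦
      (measurable_klFun.comp (μ.measurable_rnDeriv ν).ennreal_toReal).ennreal_ofReal.aemeasurable
  rw [klDiv_eq_lintegral_klFun_of_ac (h₁.add h₂), klDiv_eq_lintegral_klFun_of_ac h₁,
    klDiv_eq_lintegral_klFun_of_ac h₂, ← lintegral_rnDeriv_mul hν₁ (hmeas μ₁ ν₁),
    ← lintegral_rnDeriv_mul hν₂ (hmeas μ₂ ν₂)]
  refine le_trans (lintegral_mono_ae ?_)
    (lintegral_add_left' ((ν₁.measurable_rnDeriv _).aemeasurable.mul (hmeas μ₁ ν₁)) _).le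
  filter_upwards [Measure.rnDeriv_add' μ₁ μ₂ (ν₁ + ν₂), Measure.rnDeriv_add' ν₁ ν₂ (ν₁ + ν₂),
    Measure.rnDeriv_self (ν₁ + ν₂), Measure.rnDeriv_mul_rnDeriv h₁,
    Measure.rnDeriv_mul_rnDeriv h₂, Measure.rnDeriv_lt_top μ₁ (ν₁ + ν₂),
    Measure.rnDeriv_lt_top μ₂ (ν₁ + ν₂), Measure.rnDeriv_lt_top ν₁ (ν₁ + ν₂),
    Measure.rnDeriv_lt_top ν₂ (ν₁ + ν₂)]
    with x hμ hν hself hc₁ hc₂ hμ₁ hμ₂ hp₁ hp₂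
  simp only [Pi.add_apply, Pi.mul_apply] at hμ hν hself hc₁ hc₂ ⊢
  set p₁ := (ν₁.rnDeriv (ν₁ + ν₂) x).toReal
  set p₂ := (ν₂.rnDeriv (ν₁ + ν₂) x).toReal
  set x₁ := (μ₁.rnDeriv ν₁ x).toReal
  set x₂ := (μ₂.rnDeriv ν₂ x).toReal
  have hp : p₁ + p₂ = 1 := by
    rw [← ENNReal.toReal_add hp₁.ne hp₂.ne, ← hν, hself, ENNReal.toReal_one]
  have hmix : ((μ₁ + μ₂).rnDeriv (ν₁ + ν₂) x).toReal = p₁ * x₁ + p₂ * x₂ := by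
    rw [hμ, ENNReal.toReal_add hμ₁.ne hμ₂.ne, ← hc₁, ← hc₂, ENNReal.toReal_mul,
      ENNReal.toReal_mul, mul_comm x₁, mul_comm x₂]
  have hjensen : klFun (p₁ * x₁ + p₂ * x₂) ≤ p₁ * klFun x₁ + p₂ * klFun x₂ :=
    convexOn_klFun.2 ENNReal.toReal_nonneg ENNReal.toReal_nonneg ENNReal.toReal_nonneg
      ENNReal.toReal_nonneg hp
  rw [hmix, ← ENNReal.ofReal_toReal hp₁.ne, ← ENNReal.ofReal_toReal hp₂.ne,
    ← ENNReal.ofReal_mul ENNReal.toReal_nonneg, ← ENNReal.ofReal_mul ENNReal.toReal_nonneg,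
    ← ENNReal.ofReal_add (mul_nonneg ENNReal.toReal_nonneg (klFun_nonneg ENNReal.toReal_nonneg))
      (mul_nonneg ENNReal.toReal_nonneg (klFun_nonneg ENNReal.toReal_nonneg))]
  exact ENNReal.ofReal_le_ofReal hjensen

lemma klDiv_finset_sum_le {ι : Type*} (s : Finset ι) (μ ν : ι → Measure α)
    [∀ i, IsFiniteMeasure (μ i)] [∀ i, IsFiniteMeasure (ν i)] :
    klDiv (∑ i ∈ s, μ i) (∑ i ∈ s, ν i) ≤ ∑ i ∈ s, klDiv (μ i) (ν i) := by
  classical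
  induction s using Finset.induction_on with
  | empty => simp
  | insert i s hi ih =>
    rw [Finset.sum_insert hi, Finset.sum_insert hi, Finset.sum_insert hi]
    exact (klDiv_add_le_add _ _ _ _).trans (add_le_add_right ih _)

lemma klDiv_smul_left_ne_top {μ ν : Measure α} [IsFiniteMeasure μ] [IsFiniteMeasure ν]
    (h : klDiv μ ν ≠ ∞) (c : ℝ≥0) : klDiv (c • μ) ν ≠ ∞ := by
  rcases eq_or_ne c 0 with rfl | hc
  · simp
  obtain ⟨hμν, h_int⟩ := klDiv_ne_top_iff.1 h
  refine klDiv_ne_top (hμν.smul_left c) (Integrable.smul_measure_nnreal ?_)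
  rw [integrable_congr (llr_smul_nnreal_left hμν c hc)]
  fun_prop

lemma klDiv_smul_smul_ne_top {μ ν : Measure α} [IsFiniteMeasure μ] [IsFiniteMeasure ν]
    (h : klDiv μ ν ≠ ∞) (a : ℝ≥0) {b : ℝ≥0} (hb : b ≠ 0) : klDiv (a • μ) (b • ν) ≠ ∞ := by
  rw [klDiv_smul_right_eq_smul_left hb, smul_smul]
  exact ENNReal.mul_ne_top ENNReal.coe_ne_top (klDiv_smul_left_ne_top h _)

lemma toReal_klDiv_smul_smul {μ ν : Measure α} [IsProbabilityMeasure μ] [IsProbabilityMeasure ν]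
    (h : klDiv μ ν ≠ ∞) (a : ℝ≥0) {b : ℝ≥0} (hb : b ≠ 0) :
    (klDiv (a • μ) (b • ν)).toReal = a * ((klDiv μ ν).toReal + Real.log (a / b)) + b - a := by
  obtain ⟨hμν, h_int⟩ := klDiv_ne_top_iff.1 h
  rw [klDiv_smul_right_eq_smul_left hb, smul_smul, ENNReal.toReal_mul, ENNReal.coe_toReal,
    toReal_klDiv_smul_left hμν h_int]
  simp only [probReal_univ, mul_one, NNReal.coe_mul, NNReal.coe_inv]
  have hb' : (b : ℝ) ≠ 0 := by exact_mod_cast hb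
  rw [inv_mul_eq_div]
  field_simp
  ring

lemma klDiv_mixture_le {ι : Type*} (S : Finset ι) (P Q : ι → Measure α)
    [∀ k, IsProbabilityMeasure (P k)] [∀ k, IsProbabilityMeasure (Q k)] (w : ι → ℝ)
    (hw0 : ∀ k ∈ S, 0 ≤ w k) (hw1 : ∑ k ∈ S, w k = 1)
    (hfin : ∀ k ∈ S, 0 < w k → klDiv (Q k) (P k) ≠ ∞) :
    klDiv (∑ k ∈ S, ENNReal.ofReal (w k) • Q k) ((S.card : ℝ≥0∞)⁻¹ • ∑ k ∈ S, P k) ≤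
      ENNReal.ofReal (∑ k ∈ S, w k * (Real.log (S.card * w k) + (klDiv (Q k) (P k)).toReal)) := by
  have hS : S.Nonempty := Finset.nonempty_of_sum_ne_zero (by rw [hw1]; exact one_ne_zero)
  set b : ℝ≥0 := (S.card : ℝ≥0)⁻¹
  have hb : b ≠ 0 := inv_ne_zero (by exact_mod_cast hS.card_pos.ne')
  have hPi : (S.card : ℝ≥0∞)⁻¹ • ∑ k ∈ S, P k = ∑ k ∈ S, b • P k := by
    rw [Finset.smul_sum]
    refine Finset.sum_congr rfl fun k _ ↦ ?_
    rw [← Measure.coe_nnreal_smul, ENNReal.coe_inv (by exact_mod_cast hS.card_pos.ne'),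
      ENNReal.coe_natCast]
  have hQa : ∑ k ∈ S, ENNReal.ofReal (w k) • Q k = ∑ k ∈ S, (w k).toNNReal • Q k :=
    Finset.sum_congr rfl fun k _ ↦ Measure.coe_nnreal_smul _ _
  have hterm : ∀ k ∈ S, klDiv ((w k).toNNReal • Q k) (b • P k) ≠ ∞ ∧
      (klDiv ((w k).toNNReal • Q k) (b • P k)).toReal
        = w k * (Real.log (S.card * w k) + (klDiv (Q k) (P k)).toReal) + b - w k := by
    intro k hk
    rcases (hw0 k hk).eq_or_lt with h0 | hpos
    · simp [← h0, b]
    have hw : ((w k).toNNReal : ℝ) = w k := Real.coe_toNNReal _ (hw0 k hk)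
    refine ⟨klDiv_smul_smul_ne_top (hfin k hk hpos) _ hb, ?_⟩
    rw [toReal_klDiv_smul_smul (hfin k hk hpos) _ hb, hw]
    simp only [b, NNReal.coe_inv, NNReal.coe_natCast, div_inv_eq_mul]
    rw [mul_comm (w k) (S.card : ℝ)]
    ring
  calc klDiv (∑ k ∈ S, ENNReal.ofReal (w k) • Q k) ((S.card : ℝ≥0∞)⁻¹ • ∑ k ∈ S, P k)
      ≤ ∑ k ∈ S, klDiv ((w k).toNNReal • Q k) (b • P k) := by
        rw [hQa, hPi]
        exact klDiv_finset_sum_le S _ _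
    _ = ENNReal.ofReal (∑ k ∈ S, (klDiv ((w k).toNNReal • Q k) (b • P k)).toReal) := by
        rw [← ENNReal.toReal_sum fun k hk ↦ (hterm k hk).1,
          ENNReal.ofReal_toReal (ENNReal.sum_ne_top.2 fun k hk ↦ (hterm k hk).1)]
    _ = _ := by
        rw [Finset.sum_congr rfl fun k hk ↦ (hterm k hk).2, Finset.sum_sub_distrib,
          Finset.sum_add_distrib, hw1, Finset.sum_const, nsmul_eq_mul]
        simp only [b, NNReal.coe_inv, NNReal.coe_natCast]
        rw [mul_inv_cancel₀ (by exact_mod_cast hS.card_pos.ne'), add_sub_cancel_right]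

end InformationTheory

lemma expNeg_top : expNeg ⊤ = 0 := if_pos rfl

lemma expNeg_of_ne_top {x : ℝ≥0∞} (hx : x ≠ ⊤) : expNeg x = Real.exp (-x.toReal) := if_neg hx

lemma expNeg_nonneg (x : ℝ≥0∞) : 0 ≤ expNeg x := by
  unfold expNeg
  split <;> positivity

lemma expNeg_pos {x : ℝ≥0∞} (hx : x ≠ ⊤) : 0 < expNeg x := by
  rw [expNeg_of_ne_top hx]
  exact Real.exp_pos _

lemma expNeg_le_one (x : ℝ≥0∞) : expNeg x ≤ 1 := by
  unfold expNeg
  split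
  · exact zero_le_one
  · exact Real.exp_le_one_iff.2 (neg_nonpos.2 ENNReal.toReal_nonneg)

lemma log_expNeg {x : ℝ≥0∞} (hx : x ≠ ⊤) : Real.log (expNeg x) = -x.toReal := by
  rw [expNeg_of_ne_top hx, Real.log_exp]

lemma log_sum_expNeg_le_log_card {ι : Type*} (S : Finset ι) (E : ι → ℝ≥0∞) :
    Real.log (∑ k ∈ S, expNeg (E k)) ≤ Real.log S.card := by
  rcases (Finset.sum_nonneg fun k _ ↦ expNeg_nonneg (E k)).eq_or_lt with hZ | hZ
  · rw [← hZ, Real.log_zero]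
    exact Real.log_natCast_nonneg _
  · refine Real.log_le_log hZ ?_
    simpa using Finset.sum_le_sum fun k (_ : k ∈ S) ↦ expNeg_le_one (E k)

noncomputable def gibbsWeight {ι : Type*} (S : Finset ι) (E : ι → ℝ≥0∞) (k : ι) : ℝ :=
  expNeg (E k) / ∑ j ∈ S, expNeg (E j)

section gibbsWeight

variable {ι : Type*} (S : Finset ι) (E : ι → ℝ≥0∞)

lemma gibbsWeight_nonneg (k : ι) : 0 ≤ gibbsWeight S E k :=
  div_nonneg (expNeg_nonneg _) (Finset.sum_nonneg fun _ _ ↦ expNeg_nonneg _)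

lemma ne_top_of_gibbsWeight_pos {k : ι} (hk : 0 < gibbsWeight S E k) : E k ≠ ⊤ := by
  rintro h
  simp [gibbsWeight, h, expNeg_top] at hk

variable {S E}

lemma sum_gibbsWeight (hZ : 0 < ∑ j ∈ S, expNeg (E j)) : ∑ k ∈ S, gibbsWeight S E k = 1 := by
  unfold gibbsWeight
  rw [← Finset.sum_div, div_self hZ.ne']

lemma sum_gibbsWeight_mul_log_add (hZ : 0 < ∑ j ∈ S, expNeg (E j)) :
    ∑ k ∈ S, gibbsWeight S E k * (Real.log (S.card * gibbsWeight S E k) + (E k).toReal) =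
      Real.log S.card - Real.log (∑ j ∈ S, expNeg (E j)) := by
  have hS : (S.card : ℝ) ≠ 0 := by
    exact_mod_cast (Finset.nonempty_of_sum_ne_zero hZ.ne').card_pos.ne'
  have hterm : ∀ k ∈ S, gibbsWeight S E k * (Real.log (S.card * gibbsWeight S E k) + (E k).toReal)
      = gibbsWeight S E k * (Real.log S.card - Real.log (∑ j ∈ S, expNeg (E j))) := by
    intro k _
    rcases (gibbsWeight_nonneg S E k).eq_or_lt with h0 | hpos
    · rw [← h0, zero_mul, zero_mul]
    have hE := ne_top_of_gibbsWeight_pos S E hpos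
    rw [Real.log_mul hS hpos.ne', gibbsWeight, Real.log_div (expNeg_pos hE).ne' hZ.ne',
      log_expNeg hE]
    ring
  rw [Finset.sum_congr rfl hterm, ← Finset.sum_mul, sum_gibbsWeight hZ, one_mul]

end gibbsWeight

namespace EReal

lemma coe_finset_sum {ι : Type*} (s : Finset ι) (f : ι → ℝ) :
    ((∑ i ∈ s, f i : ℝ) : EReal) = ∑ i ∈ s, (f i : EReal) :=
  map_sum (⟨⟨((↑) : ℝ → EReal), coe_zero⟩, coe_add⟩ : ℝ →+ EReal) f s

lemma finset_sum_ne_bot {ι : Type*} {s : Finset ι} {f : ι → EReal} (h : ∀ i ∈ s, f i ≠ ⊥) :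
    ∑ i ∈ s, f i ≠ ⊥ := by
  classical
  induction s using Finset.induction_on with
  | empty => simp
  | insert i s hi ih =>
    rw [Finset.sum_insert hi]
    exact add_ne_bot_iff.2 ⟨h i (Finset.mem_insert_self i s),
      ih fun j hj ↦ h j (Finset.mem_insert_of_mem hj)⟩

lemma finset_sum_eq_top {ι : Type*} [DecidableEq ι] {s : Finset ι} {f : ι → EReal}
    (h : ∀ i ∈ s, f i ≠ ⊥) {i : ι} (hi : i ∈ s) (hfi : f i = ⊤) : ∑ i ∈ s, f i = ⊤ := by
  rw [← Finset.add_sum_erase s f hi, hfi]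
  exact top_add_of_ne_bot (finset_sum_ne_bot fun j hj ↦ h j (Finset.mem_of_mem_erase hj))

end EReal

section SimplexInf

variable {ι : Type*} (S : Finset ι) (E : ι → ℝ≥0∞)

lemma mul_log_add_ne_bot {v : ℝ} (hv : 0 ≤ v) (x : ℝ≥0∞) :
    ((v : ℝ) : EReal) * (((Real.log v : ℝ) : EReal) + (x : EReal)) ≠ ⊥ := by
  rw [Ne, EReal.mul_eq_bot]
  have : ((Real.log v : ℝ) : EReal) + (x : EReal) ≠ ⊥ :=
    EReal.add_ne_bot_iff.2 ⟨EReal.coe_ne_bot _, EReal.coe_ennreal_ne_bot x⟩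
  simp [this, not_lt.2 hv]

lemma neg_log_sum_expNeg_le {v : ι → ℝ} (hv0 : ∀ k ∈ S, 0 ≤ v k) (hv1 : ∑ k ∈ S, v k = 1) :
    ((-Real.log (∑ k ∈ S, expNeg (E k)) : ℝ) : EReal) ≤
      ∑ k ∈ S, ((v k : ℝ) : EReal) * (((Real.log (v k) : ℝ) : EReal) + (E k : EReal)) := by
  classical
  by_cases htop : ∃ k ∈ S, 0 < v k ∧ E k = ⊤
  · obtain ⟨k, hk, hvk, hEk⟩ := htop
    rw [EReal.finset_sum_eq_top (fun j hj ↦ mul_log_add_ne_bot (hv0 j hj) (E j)) hk]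
    · exact le_top
    · rw [hEk, EReal.coe_ennreal_top, EReal.add_top_of_ne_bot (EReal.coe_ne_bot _),
        EReal.coe_mul_top_of_pos hvk]
  push Not at htop
  have hreal : ∀ k ∈ S, ((v k : ℝ) : EReal) * (((Real.log (v k) : ℝ) : EReal) + (E k : EReal))
      = ((v k * (Real.log (v k) - Real.log (expNeg (E k))) : ℝ) : EReal) := by
    intro k hk
    rcases (hv0 k hk).eq_or_lt with h0 | hpos
    · simp [← h0]
    · have hE := htop k hk hpos
      rw [log_expNeg hE, sub_neg_eq_add, ← EReal.coe_ennreal_toReal hE]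
      norm_cast
  rw [Finset.sum_congr rfl hreal, ← EReal.coe_finset_sum, EReal.coe_le_coe_iff]
  exact Real.neg_log_sum_le_sum_mul_log_sub_log S hv0 hv1 (fun k _ ↦ expNeg_nonneg _)
    fun k hk hpos ↦ expNeg_pos (htop k hk hpos)

lemma iInf_simplex_le {k : ι} (hk : k ∈ S) :
    ⨅ (v : ι → ℝ) (_ : (∀ j ∈ S, 0 ≤ v j) ∧ ∑ j ∈ S, v j = 1),
      ∑ j ∈ S, ((v j : ℝ) : EReal) * (((Real.log (v j) : ℝ) : EReal) + (E j : EReal))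
      ≤ (E k : EReal) := by
  classical
  refine iInf₂_le_of_le (Pi.single k 1) ⟨fun j _ ↦ ?_, by simp [hk]⟩ (le_of_eq ?_)
  · by_cases hj : j = k <;> simp [hj]
  · rw [Finset.sum_eq_single_of_mem k hk fun j _ hj ↦ by simp [hj]]
    simp

end SimplexInf

section FreeEnergy

open InformationTheory

variable {Θ : Type*} [MeasurableSpace Θ]

lemma KL_eq_klDiv (μ ν : Measure Θ) [IsProbabilityMeasure μ] [IsProbabilityMeasure ν] :
    KL μ ν = klDiv μ ν := by
  rw [KL, klDiv_def, probReal_univ, probReal_univ, add_sub_cancel_right]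

lemma VFE_zero (lam : ℝ) (loss : Θ → ℝ) (prior : Measure Θ) : VFE lam loss prior 0 = 0 := by
  simp [VFE, KL]

lemma isProbabilityMeasure_sum_smul {ι : Type*} (S : Finset ι) (Q : ι → Measure Θ)
    [∀ k, IsProbabilityMeasure (Q k)] {w : ι → ℝ} (hw0 : ∀ k ∈ S, 0 ≤ w k)
    (hw1 : ∑ k ∈ S, w k = 1) : IsProbabilityMeasure (∑ k ∈ S, ENNReal.ofReal (w k) • Q k) := ⟨by
  simp only [Measure.coe_finsetSum, Measure.smul_apply, Finset.sum_apply, measure_univ,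
    smul_eq_mul, mul_one]
  rw [← ENNReal.ofReal_sum_of_nonneg hw0, hw1, ENNReal.ofReal_one]⟩

lemma isProbabilityMeasure_uniform_mixture {ι : Type*} {S : Finset ι} (P : ι → Measure Θ)
    [∀ k, IsProbabilityMeasure (P k)] (hS : S.Nonempty) :
    IsProbabilityMeasure ((S.card : ℝ≥0∞)⁻¹ • ∑ k ∈ S, P k) := ⟨by
  simp only [Measure.smul_apply, Measure.coe_finsetSum, Finset.sum_apply, measure_univ,
    Finset.sum_const, nsmul_eq_mul, mul_one, smul_eq_mul]
  exact ENNReal.inv_mul_cancel (by simpa using hS.ne_empty) (ENNReal.natCast_ne_top _)⟩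

lemma VFE_mixture_le {ι : Type*} (S : Finset ι) (lam : ℝ) (loss : Θ → ℝ)
    (P Q : ι → Measure Θ) [∀ k, IsProbabilityMeasure (P k)] [∀ k, IsProbabilityMeasure (Q k)]
    (w : ι → ℝ) (hw0 : ∀ k ∈ S, 0 ≤ w k) (hw1 : ∑ k ∈ S, w k = 1)
    (hfin : ∀ k ∈ S, 0 < w k → VFE lam loss (P k) (Q k) ≠ ⊤) :
    VFE lam loss ((S.card : ℝ≥0∞)⁻¹ • ∑ k ∈ S, P k) (∑ k ∈ S, ENNReal.ofReal (w k) • Q k) ≤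
      ENNReal.ofReal
        (∑ k ∈ S, w k * (Real.log (S.card * w k) + (VFE lam loss (P k) (Q k)).toReal)) := by
  have hS : S.Nonempty := Finset.nonempty_of_sum_ne_zero (by rw [hw1]; exact one_ne_zero)
  set L : ι → ℝ≥0∞ := fun k ↦ ENNReal.ofReal lam * ∫⁻ θ, ENNReal.ofReal (loss θ) ∂Q k
  have hVFE : ∀ k, VFE lam loss (P k) (Q k) = L k + klDiv (Q k) (P k) := fun k ↦ by
    rw [VFE, KL_eq_klDiv]
  have hfin' : ∀ k ∈ S, 0 < w k → L k ≠ ⊤ ∧ klDiv (Q k) (P k) ≠ ⊤ := fun k hk hpos ↦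
    ENNReal.add_ne_top.1 (hVFE k ▸ hfin k hk hpos)
  have hloss : ENNReal.ofReal lam *
      ∫⁻ θ, ENNReal.ofReal (loss θ) ∂(∑ k ∈ S, ENNReal.ofReal (w k) • Q k) =
        ENNReal.ofReal (∑ k ∈ S, w k * (L k).toReal) := by
    rw [lintegral_finsetSum_measure, Finset.mul_sum,
      ENNReal.ofReal_sum_of_nonneg fun k hk ↦ mul_nonneg (hw0 k hk) ENNReal.toReal_nonneg]
    refine Finset.sum_congr rfl fun k hk ↦ ?_
    rw [lintegral_smul_measure, smul_eq_mul, mul_left_comm]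
    rcases (hw0 k hk).eq_or_lt with h0 | hpos
    · simp [← h0]
    · rw [ENNReal.ofReal_mul (hw0 k hk), ENNReal.ofReal_toReal (hfin' k hk hpos).1]
  have := isProbabilityMeasure_sum_smul S Q hw0 hw1
  have := isProbabilityMeasure_uniform_mixture P hS
  have hentropy := Real.sum_mul_log_card_mul_nonneg S hw0 hw1
  rw [VFE, hloss, KL_eq_klDiv]
  calc _ ≤ ENNReal.ofReal (∑ k ∈ S, w k * (L k).toReal) + ENNReal.ofReal
        (∑ k ∈ S, w k * (Real.log (S.card * w k) + (klDiv (Q k) (P k)).toReal)) :=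
        add_le_add_right (klDiv_mixture_le S P Q w hw0 hw1 fun k hk hpos ↦
          (hfin' k hk hpos).2) _
    _ = _ := by
      rw [← ENNReal.ofReal_add (Finset.sum_nonneg fun k hk ↦ mul_nonneg (hw0 k hk)
          ENNReal.toReal_nonneg) ?_, ← Finset.sum_add_distrib]
      · congr 1
        refine Finset.sum_congr rfl fun k hk ↦ ?_
        rcases (hw0 k hk).eq_or_lt with h0 | hpos
        · simp [← h0]
        · rw [hVFE k, ENNReal.toReal_add (hfin' k hk hpos).1 (hfin' k hk hpos).2]
          ring
      · simp only [mul_add, Finset.sum_add_distrib]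
        exact add_nonneg hentropy
          (Finset.sum_nonneg fun k hk ↦ mul_nonneg (hw0 k hk) ENNReal.toReal_nonneg)

lemma VFE_gibbsMixture_le {ι : Type*} (S : Finset ι) (lam : ℝ) (loss : Θ → ℝ)
    (P Q : ι → Measure Θ) [∀ k, IsProbabilityMeasure (P k)] [∀ k, IsProbabilityMeasure (Q k)]
    (E : ι → ℝ≥0∞) (hE : ∀ k, E k = VFE lam loss (P k) (Q k)) :
    VFE lam loss ((S.card : ℝ≥0∞)⁻¹ • ∑ k ∈ S, P k)
        (∑ k ∈ S, ENNReal.ofReal (gibbsWeight S E k) • Q k) ≤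
      ENNReal.ofReal (Real.log S.card - Real.log (∑ k ∈ S, expNeg (E k))) := by
  rcases (Finset.sum_nonneg fun k (_ : k ∈ S) ↦ expNeg_nonneg (E k)).eq_or_lt with hZ | hZ
  · simp [gibbsWeight, ← hZ, VFE_zero]
  calc _ ≤ _ := VFE_mixture_le S lam loss P Q _ (fun k _ ↦ gibbsWeight_nonneg S E k)
        (sum_gibbsWeight hZ) fun k _ hpos ↦ hE k ▸ ne_top_of_gibbsWeight_pos S E hpos
    _ = _ := by
      simp only [← hE]
      rw [sum_gibbsWeight_mul_log_add hZ]

end FreeEnergy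

theorem composite_elbo_max_general
    {Θ : Type*} [MeasurableSpace Θ]
    (m : ℕ)
    (lam : ℝ)
    (loss : Θ → ℝ)
    (Prior : ℕ → Measure Θ) (hPrior : ∀ k, IsProbabilityMeasure (Prior k))
    (Qfam : ℕ → Set (Measure Θ)) (hQfam : ∀ k, ∀ Q ∈ Qfam k, IsProbabilityMeasure Q)
    (Qhat : ℕ → Measure Θ)
    (hQhat : ∀ k, Qhat k ∈ Qfam k ∧ ∀ Q ∈ Qfam k,
      VFE lam loss (Prior k) (Qhat k) ≤ VFE lam loss (Prior k) Q)
    (mVFE : ℕ → ℝ≥0∞) (hmVFE : ∀ k, mVFE k = VFE lam loss (Prior k) (Qhat k)) :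
    ((VFE lam loss ((m : ℝ≥0∞)⁻¹ • ∑ k ∈ Finset.Icc 1 m, Prior k)
        (∑ k ∈ Finset.Icc 1 m,
          ENNReal.ofReal (expNeg (mVFE k) / ∑ j ∈ Finset.Icc 1 m, expNeg (mVFE j)) •
            Qhat k) : ℝ≥0∞) : EReal)
      ≤ (Real.log m : ℝ) +
        ⨅ (v : ℕ → ℝ) (_ : (∀ k ∈ Finset.Icc 1 m, 0 ≤ v k) ∧
            ∑ k ∈ Finset.Icc 1 m, v k = 1),
          ∑ k ∈ Finset.Icc 1 m,
            ((v k : ℝ) : EReal) * (((Real.log (v k) : ℝ) : EReal) + (mVFE k : EReal))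
    ∧ ((Real.log m : ℝ) : EReal) +
        (⨅ (v : ℕ → ℝ) (_ : (∀ k ∈ Finset.Icc 1 m, 0 ≤ v k) ∧
            ∑ k ∈ Finset.Icc 1 m, v k = 1),
          ∑ k ∈ Finset.Icc 1 m,
            ((v k : ℝ) : EReal) * (((Real.log (v k) : ℝ) : EReal) + (mVFE k : EReal)))
      ≤ ((Real.log m : ℝ) : EReal) + ⨅ k ∈ Finset.Icc 1 m, (mVFE k : EReal) := by
  have hcard : (Finset.Icc 1 m).card = m := by simp
  have : ∀ k, IsProbabilityMeasure (Qhat k) := fun k ↦ hQfam k _ (hQhat k).1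
  have hmix := VFE_gibbsMixture_le (Finset.Icc 1 m) lam loss Prior Qhat mVFE hmVFE
  have hlog := log_sum_expNeg_le_log_card (Finset.Icc 1 m) mVFE
  rw [hcard] at hmix hlog
  set Z := ∑ k ∈ Finset.Icc 1 m, expNeg (mVFE k)
  refine ⟨?_, add_le_add_right (le_iInf₂ fun k hk ↦ ?_) _⟩
  · calc _ ≤ ((ENNReal.ofReal (Real.log m - Real.log Z) : ℝ≥0∞) : EReal) :=
          EReal.coe_ennreal_le_coe_ennreal_iff.2 hmix
      _ = ((Real.log m : ℝ) : EReal) + ((-Real.log Z : ℝ) : EReal) := by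
          rw [EReal.coe_ennreal_ofReal, max_eq_left (sub_nonneg.2 hlog), sub_eq_add_neg,
            EReal.coe_add]
      _ ≤ _ := add_le_add_right (le_iInf₂ fun v hv ↦ neg_log_sum_expNeg_le _ mVFE hv.1 hv.2) _
  · exact iInf_simplex_le _ mVFE hk

/-- **Aggregation bound for the variational free energy** (Lemma 4). Pointwise in the
sample, the free energy of the exponentially weighted aggregate `Q̂ₙ,≤ₘ` relative to the
uniform mixture prior `Πₙ,≤ₘ` is at most
`log m + inf over simplex weights ω̃ of Σₖ ω̃ₖ log(ω̃ₖ / exp(-mVFEₙ(k)))`, which is itself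
at most `log m + minₖ mVFEₙ(k)`. -/
theorem composite_elbo_max
    {Θ : Type*} [MeasurableSpace Θ]
    (Mn m : ℕ) (hm1 : 1 ≤ m) (hmM : m ≤ Mn)
    (lam : ℝ) (hlam : 0 < lam)
    (loss : Θ → ℝ) (hloss : ∀ θ, 0 ≤ loss θ)
    (Prior : ℕ → Measure Θ) (hPrior : ∀ k, IsProbabilityMeasure (Prior k))
    (Qfam : ℕ → Set (Measure Θ)) (hQfam : ∀ k, ∀ Q ∈ Qfam k, IsProbabilityMeasure Q)
    (Qhat : ℕ → Measure Θ)
    (hQhat : ∀ k, Qhat k ∈ Qfam k ∧ ∀ Q ∈ Qfam k,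
      VFE lam loss (Prior k) (Qhat k) ≤ VFE lam loss (Prior k) Q)
    (mVFE : ℕ → ℝ≥0∞) (hmVFE : ∀ k, mVFE k = VFE lam loss (Prior k) (Qhat k)) :
    ((VFE lam loss ((m : ℝ≥0∞)⁻¹ • ∑ k ∈ Finset.Icc 1 m, Prior k)
        (∑ k ∈ Finset.Icc 1 m,
          ENNReal.ofReal (expNeg (mVFE k) / ∑ j ∈ Finset.Icc 1 m, expNeg (mVFE j)) •
            Qhat k) : ℝ≥0∞) : EReal)
      ≤ (Real.log m : ℝ) +
        ⨅ (v : ℕ → ℝ) (_ : (∀ k ∈ Finset.Icc 1 m, 0 ≤ v k) ∧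
            ∑ k ∈ Finset.Icc 1 m, v k = 1),
          ∑ k ∈ Finset.Icc 1 m,
            ((v k : ℝ) : EReal) * (((Real.log (v k) : ℝ) : EReal) + (mVFE k : EReal))
    ∧ ((Real.log m : ℝ) : EReal) +
        (⨅ (v : ℕ → ℝ) (_ : (∀ k ∈ Finset.Icc 1 m, 0 ≤ v k) ∧
            ∑ k ∈ Finset.Icc 1 m, v k = 1),
          ∑ k ∈ Finset.Icc 1 m,
            ((v k : ℝ) : EReal) * (((Real.log (v k) : ℝ) : EReal) + (mVFE k : EReal)))
      ≤ ((Real.log m : ℝ) : EReal) + ⨅ k ∈ Finset.Icc 1 m, (mVFE k : EReal) :=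
  composite_elbo_max_general m lam loss Prior hPrior Qfam hQfam Qhat hQhat mVFE hmVFE
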